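/- arXiv:2205.13610 — 5 statements merged into one kernel-verified Lean document; each statement's English description precedes it below -/
import Mathlib

section
/- Let ρ be a density matrix on ℂ^d with robustness of coherence R(ρ) in a fixed orthonormal basis {|x⟩}, and let {V_a}_{a∈A}, |A| = d, be diagonal unitaries in that basis satisfying the character orthogonality (1/d)Σ_a (V_a)_{xx}\overline{(V_a)_{yy}} = δ_{xy}. Then the maximal average discrimination probability max_{POVM {M_a}} (1/d) Σ_a Tr(V_a ρ V_a† M_a) equals (1 + R(ρ))/d. -/
/-!
Conjugation by the diagonal unitaries matches the two optimisation problems. A POVM `{M_a}` gives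
`X = ∑_a V_a† M_a V_a`, positive semidefinite with unit diagonal because each `V_a` is diagonal
with unimodular entries, and `Tr(ρX) = ∑_a Tr(V_a ρ V_a† M_a)` by cyclicity of the trace.
Conversely, for such an `X` character orthogonality makes `M_a = (1/d) V_a X V_a†` a POVM, each
of whose `d` terms contributes `Tr(ρX)/d`.
-/

open scoped Matrix ComplexOrder

namespace Matrix

variable {n A R : Type*} [Fintype n] [Fintype A]

lemma IsDiag.mul_mul_conjTranspose_apply [DecidableEq n] [Semiring R] [StarRing R]
    {V : Matrix n n R} (hV : V.IsDiag) (X : Matrix n n R) (i j : n) :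
    (V * X * Vᴴ) i j = V i i * X i j * star (V j j) := by
  obtain ⟨v, rfl⟩ : ∃ v, V = diagonal v := ⟨_, hV.diagonal_diag.symm⟩
  simp [diagonal_conjTranspose, mul_diagonal, diagonal_mul]

lemma IsDiag.conjTranspose_mul_mul_apply_self [DecidableEq n] [Semiring R] [StarRing R]
    {V : Matrix n n R} (hV : V.IsDiag) (M : Matrix n n R) (i : n) :
    (Vᴴ * M * V) i i = star (V i i) * M i i * V i i := by
  simpa using hV.conjTranspose.mul_mul_conjTranspose_apply M i i

lemma IsDiag.star_mul_self_apply_of_mem_unitaryGroup [DecidableEq n] [CommRing R] [StarRing R]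
    {V : Matrix n n R} (hV : V.IsDiag) (hU : V ∈ unitaryGroup n R) (i : n) :
    star (V i i) * V i i = 1 := by
  have h := hV.conjTranspose_mul_mul_apply_self 1 i
  rwa [Matrix.mul_one, ← star_eq_conjTranspose, mem_unitaryGroup_iff'.mp hU, one_apply_eq,
    mul_one, eq_comm] at h

lemma IsDiag.conjTranspose_mul_mul_apply_self_of_mem_unitaryGroup [DecidableEq n]
    [CommRing R] [StarRing R] {V : Matrix n n R} (hV : V.IsDiag) (hU : V ∈ unitaryGroup n R)
    (M : Matrix n n R) (i : n) :
    (Vᴴ * M * V) i i = M i i := by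
  rw [hV.conjTranspose_mul_mul_apply_self, mul_right_comm,
    hV.star_mul_self_apply_of_mem_unitaryGroup hU, one_mul]

lemma trace_conj_mul_conj_of_mem_unitaryGroup [DecidableEq n] [CommRing R] [StarRing R]
    {V : Matrix n n R} (hU : V ∈ unitaryGroup n R) (ρ X : Matrix n n R) :
    (V * ρ * Vᴴ * (V * X * Vᴴ)).trace = (ρ * X).trace := by
  have hVV : Vᴴ * V = 1 := mem_unitaryGroup_iff'.mp hU
  calc (V * ρ * Vᴴ * (V * X * Vᴴ)).trace = (V * (ρ * (Vᴴ * V) * X) * Vᴴ).trace := by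
        simp only [Matrix.mul_assoc]
    _ = (ρ * X).trace := by
        rw [trace_mul_cycle, ← Matrix.mul_assoc, hVV, Matrix.one_mul, Matrix.mul_one]

lemma trace_mul_sum_conjTranspose_mul_mul [CommSemiring R] [StarRing R] (ρ : Matrix n n R)
    (V M : A → Matrix n n R) :
    (ρ * ∑ a, (V a)ᴴ * M a * V a).trace = ∑ a, (V a * ρ * (V a)ᴴ * M a).trace := by
  rw [Matrix.mul_sum, trace_sum]
  refine Finset.sum_congr rfl fun a _ => ?_
  rw [← Matrix.mul_assoc, trace_mul_comm, ← Matrix.mul_assoc, ← Matrix.mul_assoc,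
    trace_mul_cycle]

lemma sum_smul_mul_mul_conjTranspose_eq_one [DecidableEq n] [Field R] [StarRing R]
    {V : A → Matrix n n R} (hV : ∀ a, (V a).IsDiag)
    (horth : ∀ x y : n,
      (1 / Fintype.card A : R) * ∑ a, V a x x * star (V a y y) = if x = y then 1 else 0)
    {X : Matrix n n R} (hX : ∀ x, X x x = 1) :
    ∑ a, (1 / Fintype.card A : R) • (V a * X * (V a)ᴴ) = 1 := by
  ext x y
  have hentry : (∑ a, (1 / Fintype.card A : R) • (V a * X * (V a)ᴴ)) x y
      = X x y * ((1 / Fintype.card A : R) * ∑ a, V a x x * star (V a y y)) := by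
    simp only [Matrix.sum_apply, Matrix.smul_apply, (hV _).mul_mul_conjTranspose_apply,
      smul_eq_mul, Finset.mul_sum]
    exact Finset.sum_congr rfl fun a _ => by ring
  rw [hentry, horth, one_apply]
  split_ifs with hxy
  · rw [hxy, hX, mul_one]
  · rw [mul_zero]

lemma sum_conjTranspose_mul_mul_apply_self [DecidableEq n] [CommRing R] [StarRing R]
    {V M : A → Matrix n n R} (hV : ∀ a, (V a).IsDiag)
    (hU : ∀ a, V a ∈ unitaryGroup n R) (hM : ∑ a, M a = 1) (x : n) :
    (∑ a, (V a)ᴴ * M a * V a) x x = 1 := by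
  simp only [Matrix.sum_apply, (hV _).conjTranspose_mul_mul_apply_self_of_mem_unitaryGroup (hU _)]
  rw [← Matrix.sum_apply, hM, one_apply_eq]

lemma sum_trace_conj_mul_smul_conj [DecidableEq n] [Nonempty A] [Field R] [CharZero R]
    [StarRing R] {V : A → Matrix n n R} (hU : ∀ a, V a ∈ unitaryGroup n R)
    (ρ X : Matrix n n R) :
    ∑ a, (V a * ρ * (V a)ᴴ * ((1 / Fintype.card A : R) • (V a * X * (V a)ᴴ))).trace
      = (ρ * X).trace := by
  simp only [Matrix.mul_smul, trace_smul, trace_conj_mul_conj_of_mem_unitaryGroup (hU _),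
    Finset.sum_const, Finset.card_univ, nsmul_eq_mul, smul_eq_mul]
  field_simp

end Matrix

open Matrix

theorem bv_performance_eq_robustness_general {d : ℕ} (hd : 0 < d) (A : Type) [Fintype A]
    (hA : Fintype.card A = d)
    (ρ : Matrix (Fin d) (Fin d) ℂ)
    (V : A → Matrix (Fin d) (Fin d) ℂ)
    (hVdiag : ∀ a x y, x ≠ y → V a x y = 0)
    (hVunit : ∀ a, V a ∈ Matrix.unitaryGroup (Fin d) ℂ)
    (horth : ∀ x y : Fin d,
      (1 / d : ℂ) * ∑ a, V a x x * star (V a y y) = if x = y then 1 else 0)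
    (R : ℝ)
    (hR : IsGreatest {s : ℝ | ∃ X : Matrix (Fin d) (Fin d) ℂ,
        X.PosSemidef ∧ (∀ x, X x x = 1) ∧ (s : ℂ) = (ρ * X).trace - 1} R) :
    IsGreatest {p : ℝ | ∃ M : A → Matrix (Fin d) (Fin d) ℂ,
        (∀ a, (M a).PosSemidef) ∧ (∑ a, M a = 1) ∧
        (p : ℂ) = (1 / d : ℂ) * ∑ a, (V a * ρ * (V a)ᴴ * M a).trace}
      ((1 + R) / d) := by
  subst hA
  have : Nonempty A := Fintype.card_pos_iff.mp hd
  have hV (a : A) : (V a).IsDiag := fun x y => hVdiag a x y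
  constructor
  · obtain ⟨X, hX, hXdiag, hXR⟩ := hR.1
    refine ⟨fun a => (1 / Fintype.card A : ℂ) • (V a * X * (V a)ᴴ),
      fun a => (hX.mul_mul_conjTranspose_same (V a)).smul (by positivity),
      sum_smul_mul_mul_conjTranspose_eq_one hV horth hXdiag, ?_⟩
    rw [sum_trace_conj_mul_smul_conj hVunit, ← sub_add_cancel (ρ * X).trace 1, ← hXR]
    push_cast
    ring
  · rintro p ⟨M, hM, hMsum, hp⟩
    have htrace : ((Fintype.card A * p - 1 : ℝ) : ℂ)
        = (ρ * ∑ a, (V a)ᴴ * M a * V a).trace - 1 := by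
      push_cast
      rw [trace_mul_sum_conjTranspose_mul_mul, hp]
      field_simp
    have hle : Fintype.card A * p - 1 ≤ R := hR.2 ⟨_,
      posSemidef_sum _ fun a _ => (hM a).conjTranspose_mul_mul_same (V a),
      sum_conjTranspose_mul_mul_apply_self hV hVunit hMsum, htrace⟩
    rw [le_div_iff₀ (by exact_mod_cast hd)]
    linarith

/-- Let `ρ` be a density matrix on `ℂ^d` with robustness of coherence `R` (given in its
SDP form via `IsGreatest`), and let `{V a}_{a ∈ A}`, `|A| = d`, be diagonal unitaries
satisfying character orthogonality. Then the maximal average discrimination probability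
`max_{POVM} (1/d) Σ_a Tr(V_a ρ V_a† M_a)` equals `(1 + R)/d`. -/
theorem bv_performance_eq_robustness {d : ℕ} (hd : 0 < d) (A : Type) [Fintype A]
    (hA : Fintype.card A = d)
    (ρ : Matrix (Fin d) (Fin d) ℂ) (hρ : ρ.PosSemidef) (hρtr : ρ.trace = 1)
    (V : A → Matrix (Fin d) (Fin d) ℂ)
    (hVdiag : ∀ a x y, x ≠ y → V a x y = 0)
    (hVunit : ∀ a, V a ∈ Matrix.unitaryGroup (Fin d) ℂ)
    (horth : ∀ x y : Fin d,
      (1 / d : ℂ) * ∑ a, V a x x * star (V a y y) = if x = y then 1 else 0)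
    (R : ℝ)
    (hR : IsGreatest {s : ℝ | ∃ X : Matrix (Fin d) (Fin d) ℂ,
        X.PosSemidef ∧ (∀ x, X x x = 1) ∧ (s : ℂ) = (ρ * X).trace - 1} R) :
    IsGreatest {p : ℝ | ∃ M : A → Matrix (Fin d) (Fin d) ℂ,
        (∀ a, (M a).PosSemidef) ∧ (∑ a, M a = 1) ∧
        (p : ℂ) = (1 / d : ℂ) * ∑ a, (V a * ρ * (V a)ᴴ * M a).trace}
      ((1 + R) / d) :=
  bv_performance_eq_robustness_general hd A hA ρ V hVdiag hVunit horth R hR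
end

section
/- For a pure state |φ⟩ = Σ_x c_x |x⟩ on ℂ^d, the robustness of coherence equals the ℓ1-norm of coherence: R(|φ⟩⟨φ|) = Σ_{x≠y} |c_x||c_y| = (Σ_x |c_x|)² − 1. -/
/-!
A positive semidefinite `X` with unit diagonal has `|X x y| ≤ 1` by its `2 × 2` principal
minors, so `Tr(ρX) = ⟨φ|X|φ⟩ ≤ Σ_{x,y} |c_x| |c_y| = (Σ_x |c_x|)²`. Equality holds for
`X = |u⟩⟨u|`, where `u_x` is the phase of `c_x`, since then `⟨u|φ⟩ = Σ_x |c_x|`.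
-/

open scoped Matrix ComplexOrder

namespace Matrix

variable {n : Type*}

theorem trace_vecMulVec_mul [Fintype n] {R : Type*} [CommSemiring R] (a b : n → R)
    (X : Matrix n n R) : trace (vecMulVec a b * X) = b ⬝ᵥ (X *ᵥ a) := by
  rw [trace_mul_comm, mul_vecMulVec, trace_vecMulVec, dotProduct_comm]

theorem PosSemidef.norm_sq_apply_le {𝕜 : Type*} [RCLike 𝕜] {A : Matrix n n 𝕜}
    (hA : A.PosSemidef) (i j : n) : (‖A i j‖ : 𝕜) ^ 2 ≤ A i i * A j j := by
  have hdet := (hA.submatrix ![i, j]).det_nonneg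
  simpa only [det_fin_two, submatrix_apply, cons_val_zero, cons_val_one, cons_val_fin_one,
    ← hA.isHermitian.apply j i, RCLike.star_def, RCLike.mul_conj, sub_nonneg] using hdet

theorem PosSemidef.norm_apply_le_one {𝕜 : Type*} [RCLike 𝕜] {A : Matrix n n 𝕜}
    (hA : A.PosSemidef) (hdiag : ∀ i, A i i = 1) (i j : n) : ‖A i j‖ ≤ 1 := by
  have h := hA.norm_sq_apply_le i j
  rw [hdiag, hdiag, mul_one, ← RCLike.ofReal_pow, ← RCLike.ofReal_one,
    RCLike.ofReal_le_ofReal] at h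
  exact (sq_le_one_iff₀ (norm_nonneg _)).mp h

theorem norm_dotProduct_mulVec_le [Fintype n] {R : Type*} [SeminormedRing R] (a b : n → R)
    (X : Matrix n n R) (hX : ∀ i j, ‖X i j‖ ≤ 1) :
    ‖a ⬝ᵥ (X *ᵥ b)‖ ≤ (∑ i, ‖a i‖) * ∑ j, ‖b j‖ := by
  rw [Finset.sum_mul_sum]
  unfold dotProduct mulVec
  calc ‖∑ i, a i * ∑ j, X i j * b j‖
      ≤ ∑ i, ‖a i‖ * ∑ j, ‖X i j‖ * ‖b j‖ := by
        refine (norm_sum_le _ _).trans (Finset.sum_le_sum fun i _ => ?_)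
        refine (norm_mul_le _ _).trans (mul_le_mul_of_nonneg_left ?_ (norm_nonneg _))
        exact (norm_sum_le _ _).trans (Finset.sum_le_sum fun j _ => norm_mul_le _ _)
    _ ≤ ∑ i, ∑ j, ‖a i‖ * ‖b j‖ := by
        refine Finset.sum_le_sum fun i _ => ?_
        rw [Finset.mul_sum]
        refine Finset.sum_le_sum fun j _ => mul_le_mul_of_nonneg_left ?_ (norm_nonneg _)
        exact mul_le_of_le_one_left (norm_nonneg _) (hX i j)

theorem star_dotProduct_vecMulVec_mulVec [Fintype n] {R : Type*} [CommRing R] [StarRing R]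
    (u v : n → R) :
    star v ⬝ᵥ (vecMulVec u (star u) *ᵥ v) = star (star u ⬝ᵥ v) * (star u ⬝ᵥ v) := by
  rw [vecMulVec_mulVec, dotProduct_smul, star_dotProduct, star_star, dotProduct_comm (star v) u]
  simp

end Matrix

theorem Finset.sum_sum_ite_ne_mul {ι R : Type*} [DecidableEq ι] [CommRing R] (s : Finset ι)
    (f : ι → R) :
    ∑ x ∈ s, ∑ y ∈ s, (if x ≠ y then f x * f y else 0) =
      (∑ x ∈ s, f x) ^ 2 - ∑ x ∈ s, f x ^ 2 := by
  have hsplit : ∀ x y, (if x ≠ y then f x * f y else 0) =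
      f x * f y - if x = y then f x * f y else 0 := by
    intro x y
    split_ifs <;> simp_all
  simp only [hsplit, Finset.sum_sub_distrib, Finset.sum_ite_eq, ← Finset.sum_mul_sum, sq]
  simp

namespace Complex

open ComplexConjugate in
theorem conj_exp_arg_mul_I_mul_self (z : ℂ) : conj (exp (arg z * I)) * z = ‖z‖ := by
  conv_lhs => arg 2; rw [← norm_mul_exp_arg_mul_I z]
  rw [mul_left_comm, conj_mul', norm_exp_ofReal_mul_I, ofReal_one, one_pow, mul_one]

end Complex

open Matrix Complex in
theorem robustness_pure_state_eq_l1_general {d : ℕ} (c : Fin d → ℂ)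
    (hc : ∑ x, ‖c x‖ ^ 2 = 1) :
    IsGreatest {s : ℝ | ∃ X : Matrix (Fin d) (Fin d) ℂ,
        X.PosSemidef ∧ (∀ x, X x x = 1) ∧
        (s : ℂ) = ((Matrix.of fun x y => c x * star (c y)) * X).trace - 1}
      (∑ x, ∑ y, if x ≠ y then ‖c x‖ * ‖c y‖ else 0) ∧
    (∑ x, ∑ y, if x ≠ y then ‖c x‖ * ‖c y‖ else 0) = (∑ x, ‖c x‖) ^ 2 - 1 := by
  have hρ : (of fun x y => c x * star (c y)) = vecMulVec c (star c) := rfl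
  rw [Finset.sum_sum_ite_ne_mul, hc, hρ]
  refine ⟨⟨?_, ?_⟩, rfl⟩
  · set u : Fin d → ℂ := fun x => exp (arg (c x) * I)
    have hu : star u ⬝ᵥ c = ((∑ x, ‖c x‖ : ℝ) : ℂ) := by
      simp [dotProduct, u, conj_exp_arg_mul_I_mul_self]
    refine ⟨vecMulVec u (star u), posSemidef_vecMulVec_self_star u, fun x => ?_, ?_⟩
    · simp [vecMulVec_apply, u, mul_conj', norm_exp_ofReal_mul_I]
    · rw [trace_vecMulVec_mul, star_dotProduct_vecMulVec_mulVec, hu, star_def, conj_ofReal]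
      push_cast
      ring
  · rintro s ⟨X, hX, hdiag, hs⟩
    have hbound := norm_dotProduct_mulVec_le (star c) c X (hX.norm_apply_le_one hdiag)
    have hre := congrArg re hs
    rw [trace_vecMulVec_mul] at hre
    simp only [ofReal_re, sub_re, one_re, Pi.star_apply, norm_star] at hre hbound
    linarith [re_le_norm (star c ⬝ᵥ (X *ᵥ c))]

/-- For a pure state `|φ⟩ = Σ_x c_x |x⟩` on `ℂ^d`, the robustness of coherence (in its
SDP form) equals the `ℓ1`-norm of coherence:
`R(|φ⟩⟨φ|) = Σ_{x≠y} |c_x||c_y| = (Σ_x |c_x|)² − 1`. -/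
theorem robustness_pure_state_eq_l1 {d : ℕ} (hd : 0 < d) (c : Fin d → ℂ)
    (hc : ∑ x, ‖c x‖ ^ 2 = 1) :
    IsGreatest {s : ℝ | ∃ X : Matrix (Fin d) (Fin d) ℂ,
        X.PosSemidef ∧ (∀ x, X x x = 1) ∧
        (s : ℂ) = ((Matrix.of fun x y => c x * star (c y)) * X).trace - 1}
      (∑ x, ∑ y, if x ≠ y then ‖c x‖ * ‖c y‖ else 0) ∧
    (∑ x, ∑ y, if x ≠ y then ‖c x‖ * ‖c y‖ else 0) = (∑ x, ‖c x‖) ^ 2 - 1 :=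
  robustness_pure_state_eq_l1_general c hc
end

section
/- Among all d×d density matrices ρ with purity Tr(ρ²) ≤ γ (where 1/d ≤ γ ≤ 1), the maximum of Σ_{x≠y}|ρ_{xy}| equals (d−1)·√((γ − 1/d)/(1 − 1/d)), attained by the pseudopure state ρ = p|ψ_max⟩⟨ψ_max| + (1−p)I/d with p = √((γ−1/d)/(1−1/d)) and |ψ_max⟩ a maximally coherent state. -/
/-!
Since `Tr ρ = 1`, Cauchy–Schwarz on the diagonal gives `Σ_x |ρ_xx|² ≥ 1/d`, so the off-diagonal
entries carry purity at most `γ - 1/d`; Cauchy–Schwarz over the `d(d-1)` off-diagonal positions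
then gives `C_{ℓ1}(ρ)² ≤ (d-1)(dγ-1) = ((d-1)p)²`. The pseudopure state has diagonal `I/d` and
off-diagonal entries of modulus `p/d`, so its purity is `(1 + (d-1)p²)/d = γ` and its coherence is
`(d-1)p`.
-/

open scoped Matrix ComplexOrder
open Finset Matrix

variable {ι : Type*} [Fintype ι]

theorem one_le_card_mul_sum_norm_sq_diag {ρ : Matrix ι ι ℂ} (htr : ρ.trace = 1) :
    1 ≤ Fintype.card ι * ∑ x, ‖ρ x x‖ ^ 2 := by
  have hre : ∑ x, (ρ x x).re = 1 := by
    simpa [Matrix.trace, Complex.re_sum] using congrArg Complex.re htr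
  calc (1 : ℝ) = (∑ x, (ρ x x).re) ^ 2 := by rw [hre, one_pow]
    _ ≤ Fintype.card ι * ∑ x, (ρ x x).re ^ 2 := sq_sum_le_card_mul_sum_sq
    _ ≤ Fintype.card ι * ∑ x, ‖ρ x x‖ ^ 2 := by
      refine mul_le_mul_of_nonneg_left (sum_le_sum fun x _ => ?_) (Nat.cast_nonneg _)
      exact sq_le_sq.2 ((Complex.abs_re_le_norm _).trans (le_abs_self _))

variable [DecidableEq ι]

theorem sum_sum_eq_sum_sum_ite_ne_add_sum_diag {M : Type*} [AddCommMonoid M] (f : ι → ι → M) :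
    ∑ x, ∑ y, f x y = ∑ x, ∑ y, (if x ≠ y then f x y else 0) + ∑ x, f x x := by
  rw [← sum_add_distrib]
  refine sum_congr rfl fun x _ => ?_
  have hsplit : ∀ y, f x y = (if x ≠ y then f x y else 0) + if x = y then f x y else 0 := by
    intro y; by_cases h : x = y <;> simp [h]
  rw [sum_congr rfl fun y _ => hsplit y, sum_add_distrib, sum_ite_eq, if_pos (mem_univ x)]

theorem sum_sum_ite_ne_const {R : Type*} [CommRing R] (c : R) :
    ∑ x : ι, ∑ y : ι, (if x ≠ y then c else 0) = Fintype.card ι * (Fintype.card ι - 1) * c := by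
  have h := sum_sum_eq_sum_sum_ite_ne_add_sum_diag fun (_ _ : ι) => c
  simp only [sum_const, card_univ, nsmul_eq_mul] at h
  linear_combination -h

theorem sum_sum_ite_ne_eq_sum_offDiag {M : Type*} [AddCommMonoid M] (f : ι → ι → M) :
    ∑ x, ∑ y, (if x ≠ y then f x y else 0) = ∑ q ∈ univ.offDiag, f q.1 q.2 := by
  rw [← sum_product' (f := fun x y => if x ≠ y then f x y else 0), ← sum_filter]
  congr 1
  ext q
  simp

theorem sq_sum_sum_ite_ne_le (f : ι → ι → ℝ) :
    (∑ x, ∑ y, if x ≠ y then f x y else 0) ^ 2 ≤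
      Fintype.card ι * (Fintype.card ι - 1) * ∑ x, ∑ y, if x ≠ y then f x y ^ 2 else 0 := by
  have hcard : (#(univ : Finset ι).offDiag : ℝ) = Fintype.card ι * (Fintype.card ι - 1) := by
    rw [← mul_one (_ * _), ← sum_sum_ite_ne_const, sum_sum_ite_ne_eq_sum_offDiag fun _ _ => (1 : ℝ)]
    simp
  rw [sum_sum_ite_ne_eq_sum_offDiag, sum_sum_ite_ne_eq_sum_offDiag fun x y => f x y ^ 2, ← hcard]
  exact sq_sum_le_card_mul_sum_sq

noncomputable def l1Coherence (ρ : Matrix ι ι ℂ) : ℝ :=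
  ∑ x, ∑ y, if x ≠ y then ‖ρ x y‖ else 0

theorem l1Coherence_sq_le {ρ : Matrix ι ι ℂ} (htr : ρ.trace = 1) :
    l1Coherence ρ ^ 2 ≤ (Fintype.card ι - 1) * (Fintype.card ι * ∑ x, ∑ y, ‖ρ x y‖ ^ 2 - 1) := by
  have hdiag := one_le_card_mul_sum_norm_sq_diag htr
  have hcard : (1 : ℝ) ≤ Fintype.card ι := by
    refine Nat.one_le_cast.2 (Nat.one_le_iff_ne_zero.2 fun h => ?_)
    simp only [h, Nat.cast_zero, zero_mul] at hdiag
    linarith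
  have hcs : l1Coherence ρ ^ 2 ≤ _ := sq_sum_sum_ite_ne_le fun x y => ‖ρ x y‖
  rw [sum_sum_eq_sum_sum_ite_ne_add_sum_diag fun x y => ‖ρ x y‖ ^ 2]
  nlinarith [mul_nonneg (sub_nonneg.2 hcard) (sub_nonneg.2 hdiag)]

def IsMaximallyCoherent (ψ : ι → ℂ) : Prop :=
  ∀ x, ‖ψ x‖ ^ 2 = (Fintype.card ι : ℝ)⁻¹

noncomputable def pseudopure (p : ℝ) (ψ : ι → ℂ) : Matrix ι ι ℂ :=
  (p : ℂ) • vecMulVec ψ (star ψ) + ((1 - p : ℝ) : ℂ) • ((Fintype.card ι : ℂ)⁻¹ • 1)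

theorem posSemidef_pseudopure {p : ℝ} (hp0 : 0 ≤ p) (hp1 : p ≤ 1) (ψ : ι → ℂ) :
    (pseudopure p ψ).PosSemidef :=
  ((posSemidef_vecMulVec_self_star ψ).smul (Complex.zero_le_real.2 hp0)).add <|
    (PosSemidef.one.smul (by positivity)).smul (Complex.zero_le_real.2 (sub_nonneg.2 hp1))

theorem norm_pseudopure_apply_of_ne {ψ : ι → ℂ} (hψ : IsMaximallyCoherent ψ) (p : ℝ) {x y : ι}
    (hxy : x ≠ y) :
    ‖pseudopure p ψ x y‖ = |p| / Fintype.card ι := by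
  have hxy' : ‖ψ x‖ * ‖ψ y‖ = (Fintype.card ι : ℝ)⁻¹ := by
    rw [← Real.sqrt_sq (norm_nonneg (ψ x)), ← Real.sqrt_sq (norm_nonneg (ψ y)), hψ, hψ,
      Real.mul_self_sqrt (by positivity)]
  simp [pseudopure, vecMulVec_apply, hxy, hxy', div_eq_mul_inv]

theorem pseudopure_apply_self {ψ : ι → ℂ} (hψ : IsMaximallyCoherent ψ) (p : ℝ) (x : ι) :
    pseudopure p ψ x x = (Fintype.card ι : ℂ)⁻¹ := by
  have h : ψ x * star (ψ x) = (Fintype.card ι : ℂ)⁻¹ := by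
    rw [Complex.star_def, Complex.mul_conj', ← Complex.ofReal_pow, hψ, Complex.ofReal_inv,
      Complex.ofReal_natCast]
  simp only [pseudopure, Matrix.add_apply, Matrix.smul_apply, vecMulVec_apply, Pi.star_apply, h,
    one_apply_eq, smul_eq_mul]
  push_cast
  ring

theorem l1Coherence_pseudopure [Nonempty ι] {ψ : ι → ℂ} (hψ : IsMaximallyCoherent ψ) {p : ℝ}
    (hp : 0 ≤ p) :
    l1Coherence (pseudopure p ψ) = (Fintype.card ι - 1) * p := by
  have hoff : l1Coherence (pseudopure p ψ) =
      ∑ x : ι, ∑ y : ι, if x ≠ y then p / Fintype.card ι else 0 := by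
    refine sum_congr rfl fun x _ => sum_congr rfl fun y _ => ?_
    split_ifs with hxy
    · rw [norm_pseudopure_apply_of_ne hψ p hxy, abs_of_nonneg hp]
    · rfl
  rw [hoff, sum_sum_ite_ne_const]
  field_simp

theorem trace_pseudopure [Nonempty ι] {ψ : ι → ℂ} (hψ : IsMaximallyCoherent ψ) (p : ℝ) :
    (pseudopure p ψ).trace = 1 := by
  simp [Matrix.trace, pseudopure_apply_self hψ]

theorem card_mul_sum_norm_sq_pseudopure [Nonempty ι] {ψ : ι → ℂ} (hψ : IsMaximallyCoherent ψ)
    (p : ℝ) :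
    Fintype.card ι * ∑ x, ∑ y, ‖pseudopure p ψ x y‖ ^ 2 = 1 + (Fintype.card ι - 1) * p ^ 2 := by
  have hoff : (∑ x : ι, ∑ y : ι, if x ≠ y then ‖pseudopure p ψ x y‖ ^ 2 else 0) =
      ∑ x : ι, ∑ y : ι, if x ≠ y then (p / Fintype.card ι) ^ 2 else 0 := by
    refine sum_congr rfl fun x _ => sum_congr rfl fun y _ => ?_
    split_ifs with hxy
    · rw [norm_pseudopure_apply_of_ne hψ p hxy, div_pow, sq_abs, div_pow]
    · rfl
  rw [sum_sum_eq_sum_sum_ite_ne_add_sum_diag fun x y => ‖pseudopure p ψ x y‖ ^ 2, hoff,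
    sum_sum_ite_ne_const]
  simp only [pseudopure_apply_self hψ, norm_inv, RCLike.norm_natCast, inv_pow, sum_const, card_univ,
    nsmul_eq_mul]
  field_simp
  ring

theorem sub_one_mul_sq_sqrt_div_eq {n γ : ℝ} (hn : 1 ≤ n) (hγ1 : 1 / n ≤ γ) (hγ2 : γ ≤ 1) :
    (n - 1) * √((γ - 1 / n) / (1 - 1 / n)) ^ 2 = n * γ - 1 := by
  rcases hn.eq_or_lt with rfl | hn
  · norm_num at hγ1 ⊢
    linarith
  have hden : 0 < 1 - 1 / n := by
    rw [sub_pos, div_lt_one (by linarith)]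
    exact hn
  rw [Real.sq_sqrt (div_nonneg (by linarith) hden.le)]
  field_simp

/-- Among all `d×d` density matrices `ρ` with purity `Tr(ρ²) = Σ_{x,y}|ρ_{xy}|² ≤ γ`
(where `1/d ≤ γ ≤ 1`), the maximum of `C_{ℓ1}(ρ) = Σ_{x≠y}|ρ_{xy}|` equals
`(d−1)·√((γ − 1/d)/(1 − 1/d))`, attained by the pseudopure state
`p|ψ_max⟩⟨ψ_max| + (1−p)I/d` with `p = √((γ−1/d)/(1−1/d))` and `|ψ_max⟩` maximally
coherent. -/
theorem max_l1_coherence_bounded_purity {d : ℕ} (hd : 0 < d) (γ : ℝ)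
    (hγ1 : 1 / d ≤ γ) (hγ2 : γ ≤ 1) :
    IsGreatest {s : ℝ | ∃ ρ : Matrix (Fin d) (Fin d) ℂ,
        ρ.PosSemidef ∧ ρ.trace = 1 ∧ (∑ x, ∑ y, ‖ρ x y‖ ^ 2) ≤ γ ∧
        s = ∑ x, ∑ y, if x ≠ y then ‖ρ x y‖ else 0}
      ((d - 1) * Real.sqrt ((γ - 1 / d) / (1 - 1 / d))) ∧
    (∀ ψ : Fin d → ℂ, (∀ x, ‖ψ x‖ = 1 / Real.sqrt d) →
      let p : ℝ := Real.sqrt ((γ - 1 / d) / (1 - 1 / d))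
      let ρp : Matrix (Fin d) (Fin d) ℂ :=
        (p : ℂ) • Matrix.of (fun x y => ψ x * star (ψ y)) +
          ((1 - p : ℝ) : ℂ) • ((d : ℂ)⁻¹ • (1 : Matrix (Fin d) (Fin d) ℂ))
      (∑ x, ∑ y, if x ≠ y then ‖ρp x y‖ else 0)
        = (d - 1) * Real.sqrt ((γ - 1 / d) / (1 - 1 / d))) := by
  have : Nonempty (Fin d) := ⟨⟨0, hd⟩⟩
  have hd1 : (1 : ℝ) ≤ d := Nat.one_le_cast.2 hd
  set p := √((γ - 1 / d) / (1 - 1 / d))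
  have hp0 : 0 ≤ p := Real.sqrt_nonneg _
  have hp1 : p ≤ 1 := Real.sqrt_le_one.2 <|
    div_le_one_of_le₀ (by linarith) (sub_nonneg.2 (div_le_one_of_le₀ hd1 (by positivity)))
  have hpsq : (d - 1) * p ^ 2 = d * γ - 1 := sub_one_mul_sq_sqrt_div_eq hd1 hγ1 hγ2
  have hcoh : ∀ ψ : Fin d → ℂ, (∀ x, ‖ψ x‖ = 1 / √d) → IsMaximallyCoherent ψ := fun ψ hψ x => by
    rw [hψ, div_pow, Real.sq_sqrt (Nat.cast_nonneg d), Fintype.card_fin, one_pow, one_div]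
  have hψ₀ : ∀ x : Fin d, ‖((1 / √d : ℝ) : ℂ)‖ = 1 / √d := fun _ => by
    rw [Complex.norm_real, Real.norm_of_nonneg (by positivity)]
  refine ⟨⟨⟨pseudopure p fun _ => ((1 / √d : ℝ) : ℂ), posSemidef_pseudopure hp0 hp1 _,
      trace_pseudopure (hcoh _ hψ₀) p, ?_, ?_⟩, ?_⟩, fun ψ hψ => ?_⟩
  · have hpur := card_mul_sum_norm_sq_pseudopure (hcoh _ hψ₀) p
    rw [Fintype.card_fin, hpsq, add_sub_cancel] at hpur
    exact (mul_left_cancel₀ (by positivity) hpur).le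
  · rw [← l1Coherence, l1Coherence_pseudopure (hcoh _ hψ₀) hp0, Fintype.card_fin]
  · rintro _ ⟨ρ, -, htr, hpur, rfl⟩
    refine le_of_pow_le_pow_left₀ two_ne_zero (by positivity) ?_
    calc l1Coherence ρ ^ 2 ≤ (d - 1) * (d * ∑ x, ∑ y, ‖ρ x y‖ ^ 2 - 1) := by
          simpa only [Fintype.card_fin] using l1Coherence_sq_le htr
      _ ≤ (d - 1) * (d * γ - 1) := by gcongr
      _ = ((d - 1) * p) ^ 2 := by rw [← hpsq]; ring
  · have h := l1Coherence_pseudopure (hcoh ψ hψ) hp0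
    rw [pseudopure, Fintype.card_fin] at h
    exact h
end

section
/- Among all pairs (diag entries r_k ≥ 0, off-diag moduli t_{xy} ≥ 0) with Σ_k r_k = 1 and Σ_k r_k² + Σ_{x≠y} t_{xy}² = γ, the quantity Σ_{x≠y} t_{xy} is maximized when all r_k = 1/d and all t_{xy} are equal, yielding maximum value d(d−1)/(2λ₁) with λ₁ = (d/2)·√((1−1/d)/(γ−1/d)). -/
open Finset

private lemma offdiag_sum' {d : ℕ} (f : Fin d → Fin d → ℝ) :
    ∑ x, ∑ y, (if x ≠ y then f x y else 0)
      = ∑ p ∈ (univ : Finset (Fin d)).offDiag, f p.1 p.2 := by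
  have h : (univ : Finset (Fin d)).offDiag = (univ ×ˢ univ).filter (fun p => p.1 ≠ p.2) := by
    ext p; simp [Finset.mem_offDiag]
  rw [h, Finset.sum_filter, Finset.sum_product]



/-- Among all pairs (diagonal entries `r k ≥ 0`, off-diagonal moduli `t x y ≥ 0`) with
`Σ r = 1` and `Σ r² + Σ_{x≠y} t² = γ`, the quantity `Σ_{x≠y} t` is maximized when all
`r k = 1/d` and all `t x y` are equal (to `1/(2λ₁)`), yielding maximum value
`d(d−1)/(2λ₁)` with `λ₁ = (d/2)·√((1−1/d)/(γ−1/d))`. -/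
theorem lagrange_optimization_l1 (d : ℕ) (hd : 2 ≤ d) (γ : ℝ)
    (hγ1 : 1 / d ≤ γ) (hγ2 : γ ≤ 1) :
    let lam1 : ℝ := (d / 2) * Real.sqrt ((1 - 1 / d) / (γ - 1 / d))
    IsGreatest {s : ℝ | ∃ (r : Fin d → ℝ) (t : Fin d → Fin d → ℝ),
        (∀ k, 0 ≤ r k) ∧ (∀ x y, 0 ≤ t x y) ∧ (∑ k, r k = 1) ∧
        ((∑ k, (r k) ^ 2) + ∑ x, ∑ y, (if x ≠ y then (t x y) ^ 2 else 0) = γ) ∧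
        s = ∑ x, ∑ y, if x ≠ y then t x y else 0}
      (d * (d - 1) / (2 * lam1)) ∧
    ((∑ k : Fin d, ((1 : ℝ) / d) ^ 2) +
        ∑ x : Fin d, ∑ y : Fin d, (if x ≠ y then (1 / (2 * lam1)) ^ 2 else 0) = γ) ∧
    (∑ x : Fin d, ∑ y : Fin d, if x ≠ y then (1 / (2 * lam1) : ℝ) else 0)
      = d * (d - 1) / (2 * lam1) := by
  intro lam1
  have hlam : lam1 = ((d : ℝ) / 2) * Real.sqrt ((1 - 1 / d) / (γ - 1 / d)) := rfl
  clear_value lam1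
  set D : ℝ := (d : ℝ) with hDdef
  have hD2 : (2 : ℝ) ≤ D := by rw [hDdef]; exact_mod_cast hd
  have hD0 : (0 : ℝ) < D := by linarith
  have hDne : D ≠ 0 := ne_of_gt hD0
  have hb : (0 : ℝ) < 1 - 1 / D := by
    rw [sub_pos, div_lt_one hD0]; linarith
  set a : ℝ := γ - 1 / D with hadef
  have ha : 0 ≤ a := by simp only [hadef]; linarith
  have hlamnn : 0 ≤ lam1 := by rw [hlam]; positivity
  -- cardinality of the off-diagonal
  have hcard : (((univ : Finset (Fin d)).offDiag).card : ℝ) = D * D - D := by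
    have hle : d ≤ d * d := Nat.le_mul_of_pos_left d (by omega)
    rw [Finset.offDiag_card, card_univ, Fintype.card_fin, Nat.cast_sub hle]
    push_cast; ring
  have hM0 : (0 : ℝ) ≤ D * D - D := by nlinarith
  -- sum of a constant over the off-diagonal
  have hconst : ∀ c : ℝ, (∑ x : Fin d, ∑ y : Fin d, if x ≠ y then c else 0)
      = (D * D - D) * c := by
    intro c
    rw [offdiag_sum' (fun _ _ => c), Finset.sum_const, nsmul_eq_mul, hcard]
  -- the key identity
  have hkey2 : (D * D - D) * (1 / (2 * lam1)) ^ 2 = a := by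
    rcases eq_or_lt_of_le ha with h0 | hpos
    · have hlam0 : lam1 = 0 := by
        rw [hlam, ← h0, div_zero, Real.sqrt_zero, mul_zero]
      simp [hlam0, ← h0]
    · have hq : (0 : ℝ) < (1 - 1 / D) / a := div_pos hb hpos
      have hlampos : 0 < lam1 := by
        rw [hlam]
        exact mul_pos (by linarith) (Real.sqrt_pos.mpr hq)
      have hlamsq : lam1 ^ 2 = (D / 2) ^ 2 * ((1 - 1 / D) / a) := by
        rw [hlam, mul_pow, Real.sq_sqrt hq.le]
      have h4 : 4 * lam1 ^ 2 * a = D * D - D := by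
        rw [hlamsq]; field_simp; ring
      have hlamne : lam1 ≠ 0 := ne_of_gt hlampos
      field_simp
      nlinarith [h4]
  have hV : D * (D - 1) / (2 * lam1) = (D * D - D) * (1 / (2 * lam1)) := by ring
  have hV0 : 0 ≤ D * (D - 1) / (2 * lam1) := by
    apply div_nonneg (by nlinarith) (by linarith)
  have hVsq : (D * (D - 1) / (2 * lam1)) ^ 2 = (D * D - D) * a := by
    calc (D * (D - 1) / (2 * lam1)) ^ 2
        = (D * D - D) * ((D * D - D) * (1 / (2 * lam1)) ^ 2) := by ring
      _ = (D * D - D) * a := by rw [hkey2]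
  -- membership computations
  have hr1 : ∑ k : Fin d, ((1 : ℝ) / D) ^ 2 = 1 / D := by
    rw [Finset.sum_const, card_univ, Fintype.card_fin, nsmul_eq_mul, ← hDdef]
    field_simp
  have hcon : (∑ k : Fin d, ((1 : ℝ) / D) ^ 2) +
      ∑ x : Fin d, ∑ y : Fin d, (if x ≠ y then (1 / (2 * lam1)) ^ 2 else 0) = γ := by
    rw [hr1, hconst, hkey2]; simp only [hadef]; ring
  have hval : (∑ x : Fin d, ∑ y : Fin d, if x ≠ y then (1 / (2 * lam1) : ℝ) else 0)
      = D * (D - 1) / (2 * lam1) := by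
    rw [hconst, hV]
  refine ⟨⟨?_, ?_⟩, hcon, hval⟩
  · -- membership
    refine ⟨fun _ => 1 / D, fun _ _ => 1 / (2 * lam1), fun _ => by positivity,
      fun _ _ => by positivity, ?_, hcon, hval.symm⟩
    rw [Finset.sum_const, card_univ, Fintype.card_fin, nsmul_eq_mul, ← hDdef]
    field_simp
  · -- upper bound
    rintro s ⟨r, t, hr, ht, h1, h2, hseq⟩
    have hs0 : 0 ≤ s := by
      rw [hseq]
      refine Finset.sum_nonneg fun x _ => Finset.sum_nonneg fun y _ => ?_
      by_cases h : x ≠ y <;> simp [h, ht x y]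
    have hr2 : 1 / D ≤ ∑ k, (r k) ^ 2 := by
      have hcs := sq_sum_le_card_mul_sum_sq (s := (univ : Finset (Fin d))) (f := r)
      rw [h1, card_univ, Fintype.card_fin, ← hDdef, one_pow] at hcs
      rw [div_le_iff₀ hD0]
      linarith [mul_comm D (∑ k, (r k) ^ 2)]
    have ht2 : ∑ p ∈ (univ : Finset (Fin d)).offDiag, (t p.1 p.2) ^ 2 = γ - ∑ k, (r k) ^ 2 := by
      rw [← offdiag_sum' (fun x y => (t x y) ^ 2)]; linarith [h2]
    have hcs2 := sq_sum_le_card_mul_sum_sq (s := (univ : Finset (Fin d)).offDiag)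
      (f := fun p => t p.1 p.2)
    rw [ht2, hcard] at hcs2
    have hfin : s ^ 2 ≤ (D * D - D) * a := by
      rw [hseq, offdiag_sum']
      calc (∑ p ∈ (univ : Finset (Fin d)).offDiag, t p.1 p.2) ^ 2
          ≤ (D * D - D) * (γ - ∑ k, (r k) ^ 2) := hcs2
        _ ≤ (D * D - D) * a := by
            apply mul_le_mul_of_nonneg_left _ hM0
            simp only [hadef]; linarith
    calc s = Real.sqrt (s ^ 2) := (Real.sqrt_sq hs0).symm
      _ ≤ Real.sqrt ((D * D - D) * a) := Real.sqrt_le_sqrt hfin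
      _ = Real.sqrt ((D * (D - 1) / (2 * lam1)) ^ 2) := by rw [hVsq]
      _ = D * (D - 1) / (2 * lam1) := Real.sqrt_sq hV0
end

section
/- For N ≥ 3, no N-qubit state of the form |W⟩ = (1/√N) Σ_{j=1}^N e^{iφ_j} |ψ_1⟩⋯|ψ_j^⊥⟩⋯|ψ_N⟩, where {|ψ_i⟩, |ψ_i^⊥⟩} is an orthonormal basis of each qubit, is maximally coherent in the computational basis, i.e., its computational-basis coefficients cannot all have modulus 1/√(2^N). -/
/-!
If all computational-basis amplitudes of `|W⟩` have the same modulus, then `⟨W|P|W⟩ = 0` for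
every nontrivial product `P` of Pauli `Z`'s, since `P` is traceless. For `P = Z_k`,
orthonormality collapses `⟨W|Z_k|W⟩` to `(N - 2) ⟨ψ_k|Z|ψ_k⟩`, so every `|ψ_k⟩` is unbiased and
hence `⟨ψ_k|Z|ψ_k^⊥⟩ ≠ 0`. For `P = Z_k Z_l` only the cross terms of `|ψ_k^⊥⟩, |ψ_l^⊥⟩` survive,
giving `Re (a_k conj a_l) = 0` for the nonzero numbers `a_j = e^{iφ_j} ⟨ψ_j|Z|ψ_j^⊥⟩`. But the
real plane `ℂ` contains no three pairwise orthogonal nonzero vectors.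
-/

open Finset ComplexConjugate

section WeightedInner

variable {α : Type*} [Fintype α]

/-- `weightedInner σ u v = ⟨v| diag σ |u⟩`. -/
def weightedInner (σ u v : α → ℂ) : ℂ := ∑ b, σ b * (u b * conj (v b))

theorem weightedInner_one_self {u : α → ℂ} (hu : ∑ b, ‖u b‖ ^ 2 = 1) :
    weightedInner 1 u u = 1 := by
  simp only [weightedInner, Pi.one_apply, one_mul, Complex.mul_conj']
  exact_mod_cast hu

theorem weightedInner_one_eq_zero {u v : α → ℂ} (huv : ∑ b, star (u b) * v b = 0) :
    weightedInner 1 v u = 0 := by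
  simp only [weightedInner, Pi.one_apply, one_mul]
  rw [← huv]
  exact sum_congr rfl fun b _ => mul_comm _ _

theorem weightedInner_swap {σ : α → ℂ} (hσ : ∀ b, conj (σ b) = σ b) (u v : α → ℂ) :
    weightedInner σ v u = conj (weightedInner σ u v) := by
  simp only [weightedInner, map_sum, map_mul, hσ, Complex.conj_conj]
  exact sum_congr rfl fun b _ => by ring

variable {ι κ : Type*} [Fintype ι] [DecidableEq ι] [Fintype κ]

theorem sum_prod_mul_mul_conj_sum (σ : ι → α → ℂ) (e : κ → ℂ) (w : κ → ι → α → ℂ) :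
    ∑ x : ι → α, (∏ i, σ i (x i)) *
        ((∑ j, e j * ∏ i, w j i (x i)) * conj (∑ j, e j * ∏ i, w j i (x i))) =
      ∑ j, ∑ j', e j * conj (e j') * ∏ i, weightedInner (σ i) (w j i) (w j' i) := by
  calc _ = ∑ x : ι → α, ∑ j, ∑ j', e j * conj (e j') *
          ∏ i, σ i (x i) * (w j i (x i) * conj (w j' i (x i))) := by
        refine sum_congr rfl fun x _ => ?_
        rw [map_sum, sum_mul_sum, mul_sum]
        refine sum_congr rfl fun j _ => ?_
        rw [mul_sum]
        refine sum_congr rfl fun j' _ => ?_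
        simp only [map_mul, map_prod, prod_mul_distrib]
        ring
    _ = _ := by
        simp only [weightedInner, Fintype.prod_sum, mul_sum]
        rw [sum_comm]
        exact sum_congr rfl fun _ _ => sum_comm

theorem sum_prod_eq_zero_of_sum_eq_zero (σ : ι → α → ℂ) {k : ι} (hk : ∑ b, σ k b = 0) :
    ∑ x : ι → α, ∏ i, σ i (x i) = 0 := by
  rw [← Fintype.prod_sum]
  exact prod_eq_zero (mem_univ k) hk

theorem sum_weightedInner_eq_zero_of_norm_eq (σ : ι → α → ℂ) (e : κ → ℂ)
    (w : κ → ι → α → ℂ) {k : ι} (hk : ∑ b, σ k b = 0) {r : ℝ}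
    (hr : ∀ x : ι → α, ‖∑ j, e j * ∏ i, w j i (x i)‖ = r) :
    ∑ j, ∑ j', e j * conj (e j') * ∏ i, weightedInner (σ i) (w j i) (w j' i) = 0 := by
  rw [← sum_prod_mul_mul_conj_sum]
  simp only [Complex.mul_conj', hr, ← sum_mul, sum_prod_eq_zero_of_sum_eq_zero σ hk, zero_mul]

end WeightedInner

theorem card_le_two_of_pairwise_inner_eq_zero {ι : Type*} [Fintype ι] (a : ι → ℂ)
    (ha : ∀ i, a i ≠ 0) (h : Pairwise fun i j => inner ℝ (a i) (a j) = 0) :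
    Fintype.card ι ≤ 2 :=
  Complex.finrank_real_complex ▸
    (linearIndependent_of_ne_zero_of_inner_eq_zero ha h).fintype_card_le_finrank

def pauliZ : Fin 2 → ℂ := ![1, -1]

theorem conj_pauliZ (b : Fin 2) : conj (pauliZ b) = pauliZ b := by
  fin_cases b <;> simp [pauliZ]

theorem weightedInner_pauliZ_self (u : Fin 2 → ℂ) :
    weightedInner pauliZ u u = ((‖u 0‖ ^ 2 - ‖u 1‖ ^ 2 : ℝ) : ℂ) := by
  simp only [weightedInner, pauliZ, Complex.mul_conj', Fin.sum_univ_two, Matrix.cons_val_zero,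
    one_mul, Matrix.cons_val_one, Matrix.cons_val_fin_one, neg_mul, Complex.ofReal_sub,
    Complex.ofReal_pow]
  ring

section Qubit

variable {u v : Fin 2 → ℂ}

theorem norm_sq_swap_of_orthonormal (hu : ∑ b, ‖u b‖ ^ 2 = 1) (hv : ∑ b, ‖v b‖ ^ 2 = 1)
    (huv : ∑ b, star (u b) * v b = 0) : ‖v 0‖ ^ 2 = ‖u 1‖ ^ 2 ∧ ‖v 1‖ ^ 2 = ‖u 0‖ ^ 2 := by
  rw [Fin.sum_univ_two] at hu hv huv
  have h : ‖u 0‖ * ‖v 0‖ = ‖u 1‖ * ‖v 1‖ := by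
    simpa [norm_mul] using congrArg norm (eq_neg_of_add_eq_zero_left huv)
  have h2 := congrArg (· ^ 2) h
  constructor <;> nlinarith

theorem weightedInner_pauliZ_self_of_orthonormal (hu : ∑ b, ‖u b‖ ^ 2 = 1)
    (hv : ∑ b, ‖v b‖ ^ 2 = 1) (huv : ∑ b, star (u b) * v b = 0) :
    weightedInner pauliZ v v = -weightedInner pauliZ u u := by
  obtain ⟨h0, h1⟩ := norm_sq_swap_of_orthonormal hu hv huv
  rw [weightedInner_pauliZ_self, weightedInner_pauliZ_self, h0, h1]
  push_cast
  ring

theorem weightedInner_pauliZ_ne_zero (hu : ∑ b, ‖u b‖ ^ 2 = 1) (hv : ∑ b, ‖v b‖ ^ 2 = 1)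
    (huv : ∑ b, star (u b) * v b = 0) (hz : weightedInner pauliZ u u = 0) :
    weightedInner pauliZ v u ≠ 0 := by
  have hu0 : ‖u 0‖ ^ 2 = ‖u 1‖ ^ 2 := by
    rw [weightedInner_pauliZ_self] at hz
    exact sub_eq_zero.mp (by exact_mod_cast hz)
  have hv0 : ‖v 0‖ ^ 2 = ‖u 1‖ ^ 2 := (norm_sq_swap_of_orthonormal hu hv huv).1
  rw [Fin.sum_univ_two] at hu
  simp only [Fin.sum_univ_two, Complex.star_def] at huv
  have hvu : weightedInner pauliZ v u = 2 * (v 0 * conj (u 0)) := by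
    simp only [weightedInner, pauliZ, Fin.sum_univ_two, Matrix.cons_val_zero,
      Matrix.cons_val_one, Matrix.cons_val_fin_one]
    linear_combination (-1 : ℂ) * huv
  rw [hvu]
  refine mul_ne_zero two_ne_zero (mul_ne_zero ?_ ((map_ne_zero _).mpr ?_)) <;>
    rw [← norm_ne_zero_iff, ← pow_ne_zero_iff two_ne_zero] <;> nlinarith

end Qubit

section WState

variable {N : ℕ} (ψ ψp : Fin N → Fin 2 → ℂ)

/-- The `i`-th qubit of `|ψ_1⟩⋯|ψ_j^⊥⟩⋯|ψ_N⟩`, the `j`-th term of the W state. -/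
def wFactor (j i : Fin N) : Fin 2 → ℂ := if i = j then ψp i else ψ i

def pauliZOn (S : Finset (Fin N)) (i : Fin N) : Fin 2 → ℂ := if i ∈ S then pauliZ else 1

variable {ψ ψp}

theorem prod_weightedInner_wFactor_eq_zero (horth : ∀ i, ∑ b, star (ψ i b) * ψp i b = 0)
    {S : Finset (Fin N)} {j j' : Fin N} (hjj' : j ≠ j') (hS : j ∉ S ∨ j' ∉ S) :
    ∏ i, weightedInner (pauliZOn S i) (wFactor ψ ψp j i) (wFactor ψ ψp j' i) = 0 := by
  rcases hS with hj | hj'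
  · refine prod_eq_zero (mem_univ j) ?_
    simp only [pauliZOn, wFactor, hj, hjj', if_true, if_false]
    exact weightedInner_one_eq_zero (horth j)
  · refine prod_eq_zero (mem_univ j') ?_
    simp only [pauliZOn, wFactor, hj', hjj'.symm, if_true, if_false]
    rw [weightedInner_swap (fun _ => by simp), weightedInner_one_eq_zero (horth j'), map_zero]

theorem prod_weightedInner_wFactor_eq_prod_mem (hψ : ∀ i, ∑ b, ‖ψ i b‖ ^ 2 = 1)
    (hψp : ∀ i, ∑ b, ‖ψp i b‖ ^ 2 = 1) {S : Finset (Fin N)} {j j' : Fin N}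
    (h : ∀ i ∉ S, (i = j ↔ i = j')) :
    ∏ i, weightedInner (pauliZOn S i) (wFactor ψ ψp j i) (wFactor ψ ψp j' i) =
      ∏ i ∈ S, weightedInner pauliZ (wFactor ψ ψp j i) (wFactor ψ ψp j' i) := by
  rw [← Fintype.prod_ite_mem S]
  refine prod_congr rfl fun i _ => ?_
  by_cases hi : i ∈ S
  · simp only [pauliZOn, hi, if_true]
  · simp only [pauliZOn, wFactor, hi, if_false, h i hi]
    split_ifs
    exacts [weightedInner_one_self (hψp i), weightedInner_one_self (hψ i)]

theorem weightedInner_pauliZ_self_eq_zero (hN : 3 ≤ N) (hψ : ∀ i, ∑ b, ‖ψ i b‖ ^ 2 = 1)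
    (hψp : ∀ i, ∑ b, ‖ψp i b‖ ^ 2 = 1) (horth : ∀ i, ∑ b, star (ψ i b) * ψp i b = 0)
    {e : Fin N → ℂ} (he : ∀ j, ‖e j‖ = 1) {r : ℝ}
    (hr : ∀ x : Fin N → Fin 2, ‖∑ j, e j * ∏ i, wFactor ψ ψp j i (x i)‖ = r) (k : Fin N) :
    weightedInner pauliZ (ψ k) (ψ k) = 0 := by
  set β := weightedInner pauliZ (ψ k) (ψ k)
  have h := sum_weightedInner_eq_zero_of_norm_eq (pauliZOn {k}) e (wFactor ψ ψp) (k := k)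
    (by simp [pauliZOn, pauliZ]) hr
  have hdiag : ∀ j, ∑ j', e j * conj (e j') *
      ∏ i, weightedInner (pauliZOn {k} i) (wFactor ψ ψp j i) (wFactor ψ ψp j' i) =
      β - if k = j then 2 * β else 0 := by
    intro j
    rw [sum_eq_single j, Complex.mul_conj', he, Complex.ofReal_one, one_pow, one_mul,
      prod_weightedInner_wFactor_eq_prod_mem hψ hψp (fun _ _ => Iff.rfl), prod_singleton]
    · simp only [wFactor]
      split_ifs with hkj
      · rw [weightedInner_pauliZ_self_of_orthonormal (hψ k) (hψp k) (horth k)]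
        ring
      · simp [β]
    · intro j' _ hj'
      rw [prod_weightedInner_wFactor_eq_zero horth (Ne.symm hj'), mul_zero]
      by_contra! hk
      simp only [mem_singleton] at hk
      exact hj' (hk.2.trans hk.1.symm)
    · simp
  simp only [hdiag, sum_sub_distrib, sum_const, card_univ, Fintype.card_fin, nsmul_eq_mul,
    sum_ite_eq, mem_univ, if_true] at h
  have hN2 : (N : ℂ) - 2 ≠ 0 := sub_ne_zero.mpr (by norm_cast; omega)
  exact (mul_eq_zero.mp (by linear_combination h : ((N : ℂ) - 2) * β = 0)).resolve_left hN2

theorem inner_mul_weightedInner_pauliZ_eq_zero (hψ : ∀ i, ∑ b, ‖ψ i b‖ ^ 2 = 1)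
    (hψp : ∀ i, ∑ b, ‖ψp i b‖ ^ 2 = 1) (horth : ∀ i, ∑ b, star (ψ i b) * ψp i b = 0)
    (hz : ∀ k, weightedInner pauliZ (ψ k) (ψ k) = 0) {e : Fin N → ℂ} {r : ℝ}
    (hr : ∀ x : Fin N → Fin 2, ‖∑ j, e j * ∏ i, wFactor ψ ψp j i (x i)‖ = r)
    {k l : Fin N} (hkl : k ≠ l) :
    inner ℝ (e k * weightedInner pauliZ (ψp k) (ψ k))
      (e l * weightedInner pauliZ (ψp l) (ψ l)) = 0 := by
  have h := sum_weightedInner_eq_zero_of_norm_eq (pauliZOn {k, l}) e (wFactor ψ ψp) (k := k)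
    (by simp [pauliZOn, pauliZ]) hr
  rw [← Fintype.sum_prod_type', Fintype.sum_eq_add (k, l) (l, k) (by simp [hkl])] at h
  · have hkl' : ∀ i ∉ ({k, l} : Finset (Fin N)), (i = k ↔ i = l) := fun i hi => by
      simp only [mem_insert, mem_singleton, not_or] at hi
      exact iff_of_false hi.1 hi.2
    rw [prod_weightedInner_wFactor_eq_prod_mem hψ hψp hkl',
      prod_weightedInner_wFactor_eq_prod_mem hψ hψp (fun i hi => (hkl' i hi).symm),
      prod_pair hkl, prod_pair hkl] at h
    simp only [wFactor, if_neg hkl, if_neg hkl.symm, if_true] at h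
    rw [weightedInner_swap conj_pauliZ (ψp l), weightedInner_swap conj_pauliZ (ψp k)] at h
    rw [Complex.inner]
    set z := e l * weightedInner pauliZ (ψp l) (ψ l) *
      conj (e k * weightedInner pauliZ (ψp k) (ψ k))
    have hsum : z + conj z = 0 := by
      simp only [z, map_mul, Complex.conj_conj]
      linear_combination h
    rw [Complex.add_conj] at hsum
    have : 2 * z.re = 0 := by exact_mod_cast hsum
    linarith
  · rintro ⟨j, j'⟩ ⟨h1, h2⟩
    by_cases hjj' : j = j'
    · subst hjj'
      refine mul_eq_zero_of_right _ (prod_eq_zero (mem_univ k) ?_)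
      simp only [pauliZOn, wFactor, mem_insert, mem_singleton, true_or, if_true]
      split_ifs
      · rw [weightedInner_pauliZ_self_of_orthonormal (hψ k) (hψp k) (horth k), hz, neg_zero]
      · exact hz k
    · refine mul_eq_zero_of_right _ (prod_weightedInner_wFactor_eq_zero horth hjj' ?_)
      simp only [ne_eq, Prod.mk.injEq, mem_insert, mem_singleton] at h1 h2 ⊢
      grind

theorem not_forall_norm_wState_eq (hN : 3 ≤ N) (hψ : ∀ i, ∑ b, ‖ψ i b‖ ^ 2 = 1)
    (hψp : ∀ i, ∑ b, ‖ψp i b‖ ^ 2 = 1) (horth : ∀ i, ∑ b, star (ψ i b) * ψp i b = 0)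
    {e : Fin N → ℂ} (he : ∀ j, ‖e j‖ = 1) (r : ℝ) :
    ¬ ∀ x : Fin N → Fin 2, ‖∑ j, e j * ∏ i, wFactor ψ ψp j i (x i)‖ = r := by
  intro hr
  have hz := weightedInner_pauliZ_self_eq_zero hN hψ hψp horth he hr
  have hcard := card_le_two_of_pairwise_inner_eq_zero
    (fun j => e j * weightedInner pauliZ (ψp j) (ψ j))
    (fun j => mul_ne_zero (norm_ne_zero_iff.mp (by simp [he]))
      (weightedInner_pauliZ_ne_zero (hψ j) (hψp j) (horth j) (hz j)))
    (fun _ _ hkl => inner_mul_weightedInner_pauliZ_eq_zero hψ hψp horth hz hr hkl)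
  rw [Fintype.card_fin] at hcard
  omega

end WState

/-- For `N ≥ 3`, no `N`-qubit W-type state
`|W⟩ = (1/√N) Σ_j e^{iφ_j} |ψ_1⟩⋯|ψ_j^⊥⟩⋯|ψ_N⟩`, where `{|ψ_i⟩, |ψ_i^⊥⟩}` is an
orthonormal basis of each qubit, is maximally coherent in the computational basis:
its computational-basis coefficients cannot all have modulus `1/√(2^N)`. -/
theorem w_state_not_maximally_coherent (N : ℕ) (hN : 3 ≤ N)
    (ψ ψp : Fin N → Fin 2 → ℂ) (φ : Fin N → ℝ)
    (hψ : ∀ i, ∑ b, ‖ψ i b‖ ^ 2 = 1) (hψp : ∀ i, ∑ b, ‖ψp i b‖ ^ 2 = 1)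
    (horth : ∀ i, ∑ b, star (ψ i b) * ψp i b = 0) :
    ¬ ∀ x : Fin N → Fin 2,
        ‖((Real.sqrt N : ℝ) : ℂ)⁻¹ *
            ∑ j, Complex.exp ((φ j : ℂ) * Complex.I) *
              ∏ i, (if i = j then ψp i (x i) else ψ i (x i))‖
          = (Real.sqrt (2 ^ N))⁻¹ := by
  intro hflat
  refine not_forall_norm_wState_eq hN hψ hψp horth (fun j => Complex.norm_exp_ofReal_mul_I (φ j))
    (Real.sqrt N * (Real.sqrt (2 ^ N))⁻¹) fun x => ?_
  have hsqrtN : Real.sqrt N ≠ 0 := Real.sqrt_ne_zero'.mpr (by exact_mod_cast (by omega : 0 < N))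
  have hx := hflat x
  rw [norm_mul, norm_inv, Complex.norm_real, Real.norm_of_nonneg (Real.sqrt_nonneg _)] at hx
  simp only [wFactor, ite_apply]
  rw [← hx, ← mul_assoc, mul_inv_cancel₀ hsqrtN, one_mul]
end
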